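/- Let N be a prime and A ⊆ ℤ/Nℤ a nonempty set. Write D = A − A, and suppose that for some real δ ∈ (0, 1/3) and some r ≠ 0 in ℤ/Nℤ one has |D̂(r)| ≥ |D| − 4δ²|A|, where D̂(r) = Σ_{d∈D} e^(2πi d r / N). Then the diameter of A is less than δN. -/

import Mathlib

/-!
Pick `w` with `‖w‖ ≤ 1` and `w · D̂(r) = ‖D̂(r)‖`. Then `F x = 1 - Re (w e(xr/N))` is nonnegative
and `∑_{x ∈ D} F x = |D| - ‖D̂(r)‖ ≤ 4δ²|A|`. If `d = a₁ - a₂ ∈ D`, then for every `a ∈ A` both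
`a - a₂` and `a - a₁` lie in `D`, and `F (a - a₂) + F (a - a₁) ≥ 2 - ‖1 + e(dr/N)‖`; averaging over
`a` gives `‖1 + e(dr/N)‖ ≥ 2 - 8δ²`. As `‖1 + e(θ)‖ = 2|cos πθ|` and `4δ² < 1 - cos πδ` for
`δ < 1/3`, every `dr` is within `δN` of `0` in `ℤ/Nℤ`. Because `3δ ≤ 1`, a set whose differences
are all that short lies in an interval `{b, b + 1, …, b + l}` with `l < δN`; applied to `A · r`
and dilated back by `r⁻¹`, this is the required progression.
-/

open Pointwise Complex

lemma Complex.exists_norm_le_one_mul_eq_norm (z : ℂ) : ∃ w : ℂ, ‖w‖ ≤ 1 ∧ w * z = ‖z‖ := by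
  refine ⟨(starRingEnd ℂ) z / ‖z‖, ?_, ?_⟩
  · rw [norm_div, RCLike.norm_conj, norm_real, Real.norm_of_nonneg (norm_nonneg z)]
    exact div_self_le_one _
  · rw [div_mul_eq_mul_div, conj_mul']
    rcases eq_or_ne z 0 with rfl | hz
    · simp
    · field_simp

lemma Complex.norm_one_add_exp_mul_I (θ : ℝ) : ‖1 + exp (θ * I)‖ = 2 * |Real.cos (θ / 2)| := by
  have h := norm_exp_I_mul_ofReal_sub_one (θ + Real.pi)
  rw [ofReal_add, mul_add, exp_add, mul_comm I (Real.pi : ℂ), exp_pi_mul_I, add_div,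
    Real.sin_add_pi_div_two, norm_mul, Real.norm_two, Real.norm_eq_abs, ← norm_neg] at h
  rw [← h, mul_comm (θ : ℂ)]
  congr 1
  ring

lemma Real.four_mul_sq_lt_one_sub_cos_pi_mul {δ : ℝ} (hδ : 0 < δ) (hδ1 : δ < 1 / 3) :
    4 * δ ^ 2 < 1 - Real.cos (Real.pi * δ) := by
  -- With `t = πδ/2 < 0.53`: `1 - cos πδ = 2 sin² t ≥ 2 (0.95 t)² > 1.8 t²`, while `4δ² < 1.63 t²`.
  set t := Real.pi * δ / 2 with ht
  have hπ : 3.14 < Real.pi := Real.pi_gt_d2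
  have hπ' : Real.pi < 3.15 := Real.pi_lt_d2
  have ht0 : 0 < t := by positivity
  have ht1 : t < 0.53 := by rw [ht]; nlinarith
  have hq : 0.95 ≤ 1 - t ^ 2 / 6 := by nlinarith
  have hsin : t * (1 - t ^ 2 / 6) ≤ Real.sin t := by
    linarith [Real.sin_ge_sub_cube ht0.le]
  have hsq : (t * 0.95) ^ 2 ≤ Real.sin t ^ 2 :=
    pow_le_pow_left₀ (by positivity) ((mul_le_mul_of_nonneg_left hq ht0.le).trans hsin) 2
  have hπ2 : 9.85 ≤ Real.pi ^ 2 := by nlinarith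
  have hπδ : 9.85 * δ ^ 2 ≤ 4 * t ^ 2 := by
    rw [show 4 * t ^ 2 = Real.pi ^ 2 * δ ^ 2 by rw [ht]; ring]
    exact mul_le_mul_of_nonneg_right hπ2 (sq_nonneg δ)
  rw [show Real.pi * δ = 2 * t by rw [ht]; ring, Real.cos_two_mul_eq_one_sub]
  nlinarith

namespace Finset
variable {G : Type*} [AddCommGroup G] [DecidableEq G]

lemma sum_comp_sub_le_sum_sub {f : G → ℝ} (hf : ∀ x, 0 ≤ f x) {A : Finset G} {b : G}
    (hb : b ∈ A) : ∑ a ∈ A, f (a - b) ≤ ∑ x ∈ A - A, f x := by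
  refine ((sum_map A (Equiv.subRight b).toEmbedding f).symm).trans_le
    (sum_le_sum_of_subset_of_nonneg ?_ fun x _ _ ↦ hf x)
  intro x hx
  obtain ⟨a, ha, rfl⟩ := mem_map.mp hx
  exact sub_mem_sub ha hb

lemma le_two_mul_of_sum_sub_le {f : G → ℝ} (hf : ∀ x, 0 ≤ f x) {A : Finset G} {ε c : ℝ}
    (hsum : ∑ x ∈ A - A, f x ≤ ε * #A) {a₁ a₂ : G} (ha₁ : a₁ ∈ A) (ha₂ : a₂ ∈ A)
    (hc : ∀ a ∈ A, c ≤ f (a - a₂) + f (a - a₁)) : c ≤ 2 * ε := by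
  have hA : (0 : ℝ) < #A := by exact_mod_cast card_pos.mpr ⟨a₁, ha₁⟩
  have : #A * c ≤ #A * (2 * ε) :=
    calc #A * c ≤ ∑ a ∈ A, (f (a - a₂) + f (a - a₁)) := by
          simpa using card_nsmul_le_sum A _ _ hc
      _ = ∑ a ∈ A, f (a - a₂) + ∑ a ∈ A, f (a - a₁) := sum_add_distrib
      _ ≤ 2 * (ε * #A) := by
          linarith [sum_comp_sub_le_sum_sub hf ha₁, sum_comp_sub_le_sum_sub hf ha₂]
      _ = #A * (2 * ε) := by ring
  exact le_of_mul_le_mul_left this hA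

end Finset

open Finset in
theorem AddChar.two_sub_two_mul_le_norm_one_add_of_le_norm_sum {G : Type*} [AddCommGroup G]
    [DecidableEq G] (ψ : AddChar G Circle) {A : Finset G} {ε : ℝ}
    (h : (#(A - A) : ℝ) - ε * #A ≤ ‖∑ x ∈ A - A, (ψ x : ℂ)‖) {d : G} (hd : d ∈ A - A) :
    2 - 2 * ε ≤ ‖1 + (ψ d : ℂ)‖ := by
  obtain ⟨w, hw, hwZ⟩ := Complex.exists_norm_le_one_mul_eq_norm (∑ x ∈ A - A, (ψ x : ℂ))
  have re_le (z : ℂ) : (w * z).re ≤ ‖z‖ :=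
    calc (w * z).re ≤ ‖w‖ * ‖z‖ := (re_le_norm _).trans_eq (norm_mul w z)
      _ ≤ ‖z‖ := mul_le_of_le_one_left (norm_nonneg z) hw
  set F : G → ℝ := fun x ↦ 1 - (w * ψ x).re
  have hF : ∀ x, 0 ≤ F x := fun x ↦ sub_nonneg.mpr ((re_le _).trans_eq (Circle.norm_coe _))
  have hsumF : ∑ x ∈ A - A, F x ≤ ε * #A := by
    have : ∑ x ∈ A - A, F x = #(A - A) - ‖∑ x ∈ A - A, (ψ x : ℂ)‖ := by
      simp only [F, sum_sub_distrib, sum_const, nsmul_eq_mul, mul_one, ← re_sum, ← mul_sum, hwZ,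
        ofReal_re]
    linarith
  obtain ⟨a₁, ha₁, a₂, ha₂, rfl⟩ := mem_sub.mp hd
  have hpair : ∀ a ∈ A, 2 - ‖1 + (ψ (a₁ - a₂) : ℂ)‖ ≤ F (a - a₂) + F (a - a₁) := by
    intro a _
    have hsplit : (ψ (a - a₂) : ℂ) + ψ (a - a₁) = ψ (a - a₁) * (1 + ψ (a₁ - a₂)) := by
      rw [mul_add, mul_one, ← Circle.coe_mul, ← map_add_eq_mul, sub_add_sub_cancel, add_comm]
    have hre : (w * (ψ (a - a₂) + ψ (a - a₁))).re ≤ ‖1 + (ψ (a₁ - a₂) : ℂ)‖ :=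
      (re_le _).trans_eq (by rw [hsplit, norm_mul, Circle.norm_coe, one_mul])
    rw [mul_add, add_re] at hre
    simp only [F]
    linarith
  linarith [le_two_mul_of_sum_sub_le hF hsumF ha₁ ha₂ hpair]

namespace ZMod
variable {N : ℕ}

lemma natCast_lt_of_abs_valMinAbs_lt {w : ℕ} {t : ℝ} (hw : (w : ℝ) + t ≤ N)
    (h : |((w : ZMod N).valMinAbs : ℝ)| < t) : (w : ℝ) < t := by
  rcases le_or_gt w (N / 2) with hle | hlt
  · rwa [valMinAbs_natCast_of_le_half hle, Int.cast_natCast, Nat.abs_cast] at h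
  · have hwN : w < N := by
      have : (w : ℝ) < N := by linarith [(abs_nonneg _).trans_lt h]
      exact_mod_cast this
    rw [valMinAbs_natCast_of_half_lt hlt hwN] at h
    push_cast at h
    linarith [neg_abs_le ((w : ℝ) - N)]

theorem exists_subset_image_range_add_of_abs_valMinAbs_sub_lt {B : Finset (ZMod N)}
    (hB : B.Nonempty) {t : ℝ} (ht : 3 * t ≤ N)
    (h : ∀ x ∈ B, ∀ y ∈ B, |((x - y).valMinAbs : ℝ)| < t) :
    ∃ l : ℕ, (l : ℝ) < t ∧ ∃ b, B ⊆ (Finset.range (l + 1)).image (fun i : ℕ ↦ b + i) := by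
  obtain ⟨c, hc⟩ := hB
  set s : ZMod N → ℤ := fun x ↦ (x - c).valMinAbs
  obtain ⟨b, hb, hb_min⟩ := B.exists_min_image s ⟨c, hc⟩
  obtain ⟨e, he, he_max⟩ := B.exists_max_image s ⟨c, hc⟩
  set w : ZMod N → ℕ := fun x ↦ (s x - s b).toNat
  have hw_int : ∀ x ∈ B, (w x : ℤ) = s x - s b :=
    fun x hx ↦ Int.toNat_of_nonneg (sub_nonneg.mpr (hb_min x hx))
  have hw_zmod : ∀ x ∈ B, (w x : ZMod N) = x - b := by
    intro x hx
    rw [← Int.cast_natCast, hw_int x hx, Int.cast_sub, coe_valMinAbs, coe_valMinAbs]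
    ring
  have hw_lt : ∀ x ∈ B, (w x : ℝ) < t := by
    intro x hx
    refine natCast_lt_of_abs_valMinAbs_lt ?_ (hw_zmod x hx ▸ h x hx b hb)
    have hx' := abs_lt.mp (h x hx c hc)
    have hb' := abs_lt.mp (h b hb c hc)
    have : (w x : ℝ) = s x - s b := by exact_mod_cast hw_int x hx
    rw [this]
    push_cast [s]
    linarith
  refine ⟨w e, hw_lt e he, b, fun x hx ↦ Finset.mem_image.mpr ⟨w x, ?_, ?_⟩⟩
  · have := he_max x hx
    have := hw_int x hx
    have := hw_int e he
    rw [Finset.mem_range]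
    omega
  · rw [hw_zmod x hx, add_sub_cancel]

variable [NeZero N]

lemma abs_valMinAbs_le (y : ZMod N) : |(y.valMinAbs : ℝ)| ≤ N / 2 := by
  have h := y.valMinAbs_mem_Ioc
  rw [Set.mem_Ioc] at h
  have h1 : (-N : ℝ) < y.valMinAbs * 2 := by exact_mod_cast h.1
  have h2 : (y.valMinAbs * 2 : ℝ) ≤ N := by exact_mod_cast h.2
  rw [abs_le]
  constructor <;> linarith

lemma norm_one_add_toCircle (y : ZMod N) :
    ‖1 + (toCircle y : ℂ)‖ = 2 * Real.cos (Real.pi * |(y.valMinAbs : ℝ)| / N) := by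
  have hexp : (toCircle y : ℂ) = exp ((2 * Real.pi * y.valMinAbs / N : ℝ) * I) := by
    have h := toCircle_intCast (N := N) y.valMinAbs
    rw [coe_valMinAbs] at h
    rw [h]
    push_cast
    ring_nf
  have hN : (0 : ℝ) < N := by exact_mod_cast Nat.pos_of_neZero N
  have hcos : 0 ≤ Real.cos (Real.pi * |(y.valMinAbs : ℝ)| / N) := by
    apply Real.cos_nonneg_of_neg_pi_div_two_le_of_le
    · have : 0 ≤ Real.pi * |(y.valMinAbs : ℝ)| / N := by positivity
      linarith [Real.pi_pos]
    · rw [div_le_iff₀ hN]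
      nlinarith [abs_valMinAbs_le y, Real.pi_pos]
  have harg : |2 * Real.pi * y.valMinAbs / N / 2| = Real.pi * |(y.valMinAbs : ℝ)| / N := by
    rw [show 2 * Real.pi * y.valMinAbs / N / 2 = Real.pi / N * y.valMinAbs by ring, abs_mul,
      abs_of_pos (by positivity)]
    ring
  rw [hexp, Complex.norm_one_add_exp_mul_I, ← Real.cos_abs, harg, abs_of_nonneg hcos]

lemma abs_valMinAbs_lt_of_le_norm_one_add_toCircle {δ : ℝ} (hδ : 0 < δ) (hδ1 : δ < 1 / 3)
    {y : ZMod N} (h : 2 - 8 * δ ^ 2 ≤ ‖1 + (toCircle y : ℂ)‖) :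
    |(y.valMinAbs : ℝ)| < δ * N := by
  have hN : (0 : ℝ) < N := by exact_mod_cast Nat.pos_of_neZero N
  by_contra! hle
  have hcos : Real.cos (Real.pi * |(y.valMinAbs : ℝ)| / N) ≤ Real.cos (Real.pi * δ) := by
    apply Real.cos_le_cos_of_nonneg_of_le_pi (by positivity)
    · rw [div_le_iff₀ hN]
      nlinarith [abs_valMinAbs_le y, Real.pi_pos]
    · rw [le_div_iff₀ hN]
      nlinarith [Real.pi_pos]
  rw [norm_one_add_toCircle] at h
  linarith [Real.four_mul_sq_lt_one_sub_cos_pi_mul hδ hδ1]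

end ZMod

/-- **Lemma 9** (Green–Ruzsa). Let `N` be prime and `A ⊆ ℤ/Nℤ` nonempty. Write
`D = A − A`, and suppose `|D̂(r)| ≥ |D| − 4δ²|A|` for some `δ ∈ (0, 1/3)` and some
`r ≠ 0`, where `D̂(r) = ∑_{d ∈ D} e(dr/N)`. Then `diam A < δN`, i.e. there are `a, d`
and `l < δN` with `A ⊆ {a, a+d, …, a+ld}`. -/
theorem diameter_lt_of_large_fourier_coefficient {N : ℕ} (hN : N.Prime)
    (A : Finset (ZMod N)) (hA : A.Nonempty) (δ : ℝ) (hδ : 0 < δ) (hδ1 : δ < 1 / 3)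
    (r : ZMod N) (hr : r ≠ 0)
    (hfourier :
      ((A - A).card : ℝ) - 4 * δ ^ 2 * A.card ≤
        ‖∑ x ∈ A - A,
          Complex.exp (2 * Real.pi * Complex.I * ((x * r : ZMod N).val : ℂ) / N)‖) :
    ∃ l : ℕ, (l : ℝ) < δ * N ∧
      ∃ a d : ZMod N,
        A ⊆ (Finset.range (l + 1)).image (fun i : ℕ => a + (i : ZMod N) * d) := by
  have : Fact N.Prime := ⟨hN⟩
  set ψ : AddChar (ZMod N) Circle := ZMod.toCircle.mulShift r
  have hψ (x : ZMod N) : (ψ x : ℂ) = ZMod.toCircle (x * r) := by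
    rw [AddChar.mulShift_apply, mul_comm]
  have hclose : ∀ d ∈ A - A, |((d * r).valMinAbs : ℝ)| < δ * N := by
    intro d hd
    refine ZMod.abs_valMinAbs_lt_of_le_norm_one_add_toCircle hδ hδ1 ?_
    have := ψ.two_sub_two_mul_le_norm_one_add_of_le_norm_sum
      (by simpa only [hψ, ZMod.toCircle_apply] using hfourier) hd
    rw [hψ] at this
    linarith
  have hpairs : ∀ x ∈ A.image (· * r), ∀ y ∈ A.image (· * r),
      |((x - y).valMinAbs : ℝ)| < δ * N := by
    simp only [Finset.mem_image]
    rintro _ ⟨x, hx, rfl⟩ _ ⟨y, hy, rfl⟩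
    rw [← sub_mul]
    exact hclose _ (Finset.sub_mem_sub hx hy)
  obtain ⟨l, hl, b, hb⟩ := ZMod.exists_subset_image_range_add_of_abs_valMinAbs_sub_lt
    (hA.image (· * r)) (by nlinarith [(Nat.cast_nonneg N : (0 : ℝ) ≤ N)]) hpairs
  refine ⟨l, hl, b * r⁻¹, r⁻¹, fun a ha ↦ ?_⟩
  obtain ⟨i, hi, hia⟩ := Finset.mem_image.mp (hb (Finset.mem_image_of_mem (· * r) ha))
  exact Finset.mem_image.mpr ⟨i, hi, by rw [← add_mul, hia, mul_inv_cancel_right₀ hr]⟩
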